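/- (Projective triple quad formula) If U, V and W are nonzero vectors with a_U, a_V, a_W all nonzero that are linearly dependent (so the projective points [U], [V], [W] are collinear), then the projective quadrances q_w = q(U,V), q_u = q(V,W), q_v = q(U,W) satisfy (q_u + q_v + q_w)² = 2(q_u² + q_v² + q_w²) + 4·q_u·q_v·q_w. -/

import Mathlib

/-- The projective quadrance between the projective points `[U]` and `[V]`. -/
def projQuadrance {F : Type*} [Field F] {M : Type*} [AddCommGroup M] [Module F M]
    (B : LinearMap.BilinForm F M) (U V : M) : F :=
  1 - (B U V) ^ 2 / (B U U * B V V)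

/-- The projective spread between the projective lines `WU` and `WV`
(the spread at the vertex `[W]`). -/
def projSpread {F : Type*} [Field F] {M : Type*} [AddCommGroup M] [Module F M]
    (B : LinearMap.BilinForm F M) (W U V : M) : F :=
  1 - (B W W * B U V - B U W * B V W) ^ 2 /
      ((B U U * B W W - (B U W) ^ 2) * (B V V * B W W - (B V W) ^ 2))

/-!
Collinearity of `[U], [V], [W]` makes the Gram matrix of `U, V, W` singular, and its determinant
`Δ` is the only input needed: writing `P = a_U a_V a_W`, the triple quad function
`(q_u + q_v + q_w)² - 2(q_u² + q_v² + q_w²) - 4 q_u q_v q_w` equals `Δ Δ' / P²`, where `Δ'` is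
`Δ` with the sign of every term except `2 b_UV b_VW b_UW` reversed.
-/

theorem LinearMap.BilinForm.det_gram_eq_zero_of_not_linearIndependent {R M ι : Type*}
    [CommRing R] [IsDomain R] [AddCommGroup M] [Module R M] [Fintype ι] [DecidableEq ι] (B : LinearMap.BilinForm R M)
    {v : ι → M} (hv : ¬LinearIndependent R v) :
    (Matrix.of fun i j => B (v i) (v j)).det = 0 := by
  obtain ⟨g, hsum, i, hi⟩ := Fintype.not_linearIndependent_iff.mp hv
  refine Matrix.exists_mulVec_eq_zero_iff.mp ⟨g, fun hg => hi (congrFun hg i), ?_⟩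
  ext k
  have hB : B (v k) (∑ j, g j • v j) = 0 := by rw [hsum, map_zero]
  simpa [Matrix.mulVec, dotProduct, map_sum, mul_comm] using hB

theorem triple_quad_of_gram_det_eq_zero {F : Type*} [Field F] {aU aV aW bUV bVW bUW : F}
    (haU : aU ≠ 0) (haV : aV ≠ 0) (haW : aW ≠ 0)
    (hdet : aU * aV * aW + 2 * bUV * bVW * bUW - aU * bVW ^ 2 - aV * bUW ^ 2 - aW * bUV ^ 2 = 0) :
    (1 - bVW ^ 2 / (aV * aW) + (1 - bUW ^ 2 / (aU * aW)) + (1 - bUV ^ 2 / (aU * aV))) ^ 2 =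
      2 * ((1 - bVW ^ 2 / (aV * aW)) ^ 2 + (1 - bUW ^ 2 / (aU * aW)) ^ 2 +
          (1 - bUV ^ 2 / (aU * aV)) ^ 2) +
        4 * (1 - bVW ^ 2 / (aV * aW)) * (1 - bUW ^ 2 / (aU * aW)) * (1 - bUV ^ 2 / (aU * aV)) := by
  set Δ := aU * aV * aW + 2 * bUV * bVW * bUW - aU * bVW ^ 2 - aV * bUW ^ 2 - aW * bUV ^ 2
  set Δ' := aU * bVW ^ 2 + aV * bUW ^ 2 + aW * bUV ^ 2 - aU * aV * aW + 2 * bUV * bVW * bUW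
  rw [← sub_eq_zero]
  calc _ = Δ * Δ' / (aU * aV * aW) ^ 2 := by field_simp; ring
    _ = 0 := by rw [hdet, zero_mul, zero_div]

theorem projective_triple_quad_formula_general
    {F : Type*} [Field F]
    {M : Type*} [AddCommGroup M] [Module F M]
    (B : LinearMap.BilinForm F M) (hsym : ∀ x y : M, B x y = B y x)
    (U V W : M)
    (haU : B U U ≠ 0) (haV : B V V ≠ 0) (haW : B W W ≠ 0)
    (hdep : ∃ a b c : F, (a ≠ 0 ∨ b ≠ 0 ∨ c ≠ 0) ∧ a • U + b • V + c • W = 0) :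
    (projQuadrance B V W + projQuadrance B U W + projQuadrance B U V) ^ 2 =
      2 * (projQuadrance B V W ^ 2 + projQuadrance B U W ^ 2 + projQuadrance B U V ^ 2) +
        4 * projQuadrance B V W * projQuadrance B U W * projQuadrance B U V := by
  have hUVW : ¬LinearIndependent F ![U, V, W] := by
    obtain ⟨a, b, c, hne, hsum⟩ := hdep
    refine Fintype.not_linearIndependent_iff.mpr ⟨![a, b, c], ?_, ?_⟩
    · simpa [Fin.sum_univ_three] using hsum
    · rcases hne with h | h | h
      exacts [⟨0, h⟩, ⟨1, h⟩, ⟨2, h⟩]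
  have hdet := B.det_gram_eq_zero_of_not_linearIndependent hUVW
  simp only [Matrix.det_fin_three, Matrix.of_apply, Matrix.cons_val_zero, Matrix.cons_val_one,
    Matrix.vecHead, Matrix.vecTail, Function.comp_apply, Fin.succ_zero_eq_one,
    Matrix.cons_val_two] at hdet
  rw [hsym V U, hsym W U, hsym W V] at hdet
  exact triple_quad_of_gram_det_eq_zero haU haV haW (by linear_combination hdet)

theorem projective_triple_quad_formula
    {F : Type*} [Field F] (hchar : (2 : F) ≠ 0)
    {M : Type*} [AddCommGroup M] [Module F M]
    (B : LinearMap.BilinForm F M) (hsym : ∀ x y : M, B x y = B y x)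
    (U V W : M) (hU : U ≠ 0) (hV : V ≠ 0) (hW : W ≠ 0)
    (haU : B U U ≠ 0) (haV : B V V ≠ 0) (haW : B W W ≠ 0)
    (hdep : ∃ a b c : F, (a ≠ 0 ∨ b ≠ 0 ∨ c ≠ 0) ∧ a • U + b • V + c • W = 0) :
    (projQuadrance B V W + projQuadrance B U W + projQuadrance B U V) ^ 2 =
      2 * (projQuadrance B V W ^ 2 + projQuadrance B U W ^ 2 + projQuadrance B U V ^ 2) +
        4 * projQuadrance B V W * projQuadrance B U W * projQuadrance B U V :=
  projective_triple_quad_formula_general B hsym U V W haU haV haW hdep
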